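/- arXiv:1703.09669 — 2 statements merged into one kernel-verified Lean document; each statement's English description precedes it below -/
import Mathlib

section
/- Every vector in the base of the polymatroid is generated by a feasible allocation on the edges of the graph: for every r ∈ A_0 there exists d : N × N → ℝ with d_{ij} ≥ 0 for all i,j, d_{ij} = 0 whenever (i,j) ∉ E, Σ_{j∈N_i} d_{ij} = D_i for every node i, and Σ_{j∈N_i} d_{ji} = r_i for every node i. -/
open Finset
open scoped Classical

noncomputable section

namespace SharingEcon

variable {V : Type*} [Fintype V] [DecidableEq V]

/-- The set of neighbors of a set of nodes: `N_S = ⋃ i ∈ S, N_i`. -/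
def nbrs (G : SimpleGraph V) [DecidableRel G.Adj] (S : Finset V) : Finset V :=
  S.biUnion fun i => G.neighborFinset i

/-- The set function `f(S) = ∑_{j ∈ N_S} D_j`. -/
def fS (G : SimpleGraph V) [DecidableRel G.Adj] (D : V → ℝ) (S : Finset V) : ℝ :=
  ∑ j ∈ nbrs G S, D j

/-- The polymatroid polyhedron `A` of a set function `f`. -/
def polyA (f : Finset V → ℝ) : Set (V → ℝ) :=
  {r | (∀ i, 0 ≤ r i) ∧ ∀ S : Finset V, ∑ i ∈ S, r i ≤ f S}

/-- The base `A₀` of the polymatroid. -/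
def polyBase (f : Finset V → ℝ) : Set (V → ℝ) :=
  {r | r ∈ polyA f ∧ ∑ i, r i = f Finset.univ}

/-- The coordinates of a vector sorted in nondecreasing order. -/
def sortedVec (x : V → ℝ) : List ℝ :=
  (Finset.univ.val.map x).sort (· ≤ ·)

/-- `x` is lexicographically at least `y` (comparing sorted coordinate vectors). -/
def lexGE (x y : V → ℝ) : Prop :=
  sortedVec x = sortedVec y ∨
    ∃ k : ℕ, (∀ j < k, (sortedVec x).getD j 0 = (sortedVec y).getD j 0) ∧
      (sortedVec y).getD k 0 < (sortedVec x).getD k 0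

/-- `r` is lexicographically optimal in `A` for the sharing-ratio vectors `(r i / D i)`. -/
def LexOptimal (A : Set (V → ℝ)) (D : V → ℝ) (r : V → ℝ) : Prop :=
  r ∈ A ∧ ∀ r' ∈ A, lexGE (fun i => r i / D i) (fun i => r' i / D i)

/-- The sharing ratio of node `i`. -/
def ratio (D r : V → ℝ) (i : V) : ℝ := r i / D i

/-- The distinct values of the sharing ratios, sorted increasingly. -/
def vals (D r : V → ℝ) : List ℝ :=
  (Finset.univ.image (ratio D r)).sort (· ≤ ·)

/-- The number `K(r)` of distinct sharing-ratio values. -/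
def numLevels (D r : V → ℝ) : ℕ := (vals D r).length

/-- The `k`-th smallest distinct ratio value `v_k(r)` (1-indexed). -/
def v (D r : V → ℝ) (k : ℕ) : ℝ := (vals D r).getD (k - 1) 0

/-- The `k`-th level set `L_k(r)` (1-indexed). -/
def level (D r : V → ℝ) (k : ℕ) : Finset V :=
  Finset.univ.filter fun i => ratio D r i = v D r k

end SharingEcon
namespace SharingEcon

lemma mem_nbrs {V : Type*} [Fintype V] [DecidableEq V] {G : SimpleGraph V} [DecidableRel G.Adj] {S : Finset V} {j : V} :
    j ∈ nbrs G S ↔ ∃ i ∈ S, G.Adj j i := by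
  simp only [nbrs, Finset.mem_biUnion, SimpleGraph.mem_neighborFinset]
  exact ⟨fun ⟨i, hi, h⟩ => ⟨i, hi, h.symm⟩, fun ⟨i, hi, h⟩ => ⟨i, hi, h.symm⟩⟩

lemma nbrs_univ {V : Type*} [Fintype V] [DecidableEq V] {G : SimpleGraph V} [DecidableRel G.Adj]
    (hniso : ∀ i, (G.neighborFinset i).Nonempty) : nbrs G (univ : Finset V) = univ := by
  ext j
  simp only [mem_univ, iff_true, mem_nbrs]
  obtain ⟨i, hi⟩ := hniso j
  exact ⟨i, by simp, (SimpleGraph.mem_neighborFinset _ _ _).1 hi⟩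

lemma nbrs_eq_filter {V : Type*} [Fintype V] [DecidableEq V] {G : SimpleGraph V} [DecidableRel G.Adj] (S : Finset V) :
    nbrs G S = univ.filter (fun j => ((G.neighborFinset j) ∩ S).Nonempty) := by
  ext j
  simp only [mem_nbrs, mem_filter, mem_univ, true_and, Finset.Nonempty, mem_inter,
    SimpleGraph.mem_neighborFinset]
  tauto

/-- Key inequality: for any weight vector `w`,
`∑ j, w j * r j ≤ ∑ i, D i * max_{j ∈ N_i} w j`. -/
lemma key_ineq {V : Type*} [Fintype V] [DecidableEq V] (G : SimpleGraph V) [DecidableRel G.Adj]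
    (hniso : ∀ i, (G.neighborFinset i).Nonempty) (D : V → ℝ) (hD : ∀ i, 0 ≤ D i)
    {r : V → ℝ} (hr : r ∈ polyBase (fS G D)) (w : V → ℝ) :
    ∑ j, w j * r j ≤ ∑ i, D i * (G.neighborFinset i).sup' (hniso i) w := by
  obtain ⟨⟨hr0, hrS⟩, hrsum⟩ := hr
  -- strong induction on number of distinct values of w
  generalize hn : (univ.image w).card = n
  induction n using Nat.strong_induction_on generalizing w with
  | _ n IH =>
  rcases isEmpty_or_nonempty V with hV | hV
  · simp
  rcases le_or_gt (univ.image w).card 1 with hcard | hcard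
  · -- w is constant
    have hne : (univ.image w).Nonempty := (Finset.univ_nonempty.image w)
    obtain ⟨c, hc⟩ := Finset.card_le_one_iff_subset_singleton.mp hcard
    have hwc : ∀ j, w j = c := by
      intro j
      have : w j ∈ univ.image w := mem_image_of_mem w (mem_univ j)
      simpa using hc this
    have hsum : ∑ i, r i = ∑ i, D i := by
      rw [hrsum, fS, nbrs_univ hniso]
    refine le_of_eq ?_
    calc ∑ j, w j * r j = c * ∑ j, r j := by
          rw [Finset.mul_sum]; exact Finset.sum_congr rfl fun j _ => by rw [hwc j]
      _ = ∑ i, D i * c := by rw [hsum, Finset.mul_sum]; exact Finset.sum_congr rfl fun i _ => mul_comm _ _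
      _ = ∑ i, D i * (G.neighborFinset i).sup' (hniso i) w := by
          refine Finset.sum_congr rfl fun i _ => ?_
          have hs : (G.neighborFinset i).sup' (hniso i) w = c := by
            rw [Finset.sup'_congr (hniso i) rfl (fun j _ => hwc j), Finset.sup'_const]
          rw [hs]
  · -- at least two distinct values
    set M := univ.sup' Finset.univ_nonempty w with hM
    set S := univ.filter (fun j => w j = M) with hSdef
    have hMmem : M ∈ univ.image w := by
      obtain ⟨b, _, hb⟩ := Finset.exists_mem_eq_sup' Finset.univ_nonempty w
      rw [hM, hb]
      exact mem_image_of_mem w (mem_univ b)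
    have hwleM : ∀ j, w j ≤ M := fun j => Finset.le_sup' w (mem_univ j)
    have hT : (univ \ S).Nonempty := by
      by_contra h
      rw [Finset.not_nonempty_iff_eq_empty, Finset.sdiff_eq_empty_iff_subset] at h
      have : ∀ j, w j = M := fun j => (Finset.mem_filter.mp (h (mem_univ j))).2
      have : univ.image w ⊆ {M} := by
        intro x hx
        obtain ⟨j, _, rfl⟩ := Finset.mem_image.mp hx
        simp [this j]
      have := Finset.card_le_card this
      simp at this; omega
    set t := (univ \ S).sup' hT w with ht
    have htltM : t < M := by
      obtain ⟨b, hb, hbe⟩ := Finset.exists_mem_eq_sup' hT w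
      rw [Finset.mem_sdiff, hSdef, Finset.mem_filter] at hb
      have hbne : w b ≠ M := fun h => hb.2 ⟨mem_univ b, h⟩
      rw [ht, hbe]
      exact lt_of_le_of_ne (hwleM b) hbne
    have hwt : ∀ j, w j ≠ M → w j ≤ t := by
      intro j hj
      refine Finset.le_sup' w ?_
      simp [hSdef, hj]
    set w' := fun j => if w j = M then t else w j with hw'
    have hw'le : ∀ j, w' j ≤ t := by
      intro j
      by_cases h : w j = M
      · simp [hw', h]
      · simpa [hw', h] using hwt j h
    have hcard' : (univ.image w').card < n := by
      have hsub : univ.image w' ⊆ insert t ((univ.image w).erase M) := by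
        intro x hx
        obtain ⟨j, _, rfl⟩ := Finset.mem_image.mp hx
        by_cases h : w j = M
        · simp [hw', h]
        · simp only [hw', if_neg h]
          exact Finset.mem_insert_of_mem (Finset.mem_erase.mpr ⟨h, mem_image_of_mem w (mem_univ j)⟩)
      have htmem : t ∈ (univ.image w).erase M := by
        refine Finset.mem_erase.mpr ⟨ne_of_lt htltM, ?_⟩
        obtain ⟨b, hb, hbe⟩ := Finset.exists_mem_eq_sup' hT w
        rw [ht, hbe]
        exact mem_image_of_mem w (mem_univ b)
      rw [Finset.insert_eq_self.mpr htmem] at hsub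
      calc (univ.image w').card ≤ ((univ.image w).erase M).card :=
            Finset.card_le_card hsub
        _ = (univ.image w).card - 1 := Finset.card_erase_of_mem hMmem
        _ < n := by
            have h1 : 1 < (univ.image w).card := hcard
            omega
    have hIH := IH _ hcard' w' rfl
    have hdecomp : ∀ j, w j * r j = w' j * r j + (if w j = M then (M - t) * r j else 0) := by
      intro j
      by_cases h : w j = M
      · have hj : w' j = t := by simp only [hw', if_pos h]
        rw [hj, if_pos h, h]; ring
      · have hj : w' j = w j := by simp only [hw', if_neg h]
        rw [hj, if_neg h]; ring
    have hLHS : ∑ j, w j * r j = (∑ j, w' j * r j) + ∑ j ∈ S, (M - t) * r j := by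
      rw [Finset.sum_congr rfl (fun j _ => hdecomp j), Finset.sum_add_distrib]
      congr 1
      rw [hSdef, Finset.sum_filter]
    have hRHS : ∀ i, (G.neighborFinset i).sup' (hniso i) w' +
        (if ((G.neighborFinset i) ∩ S).Nonempty then (M - t) else 0) ≤
        (G.neighborFinset i).sup' (hniso i) w := by
      intro i
      by_cases h : ((G.neighborFinset i) ∩ S).Nonempty
      · obtain ⟨j, hj⟩ := h
        rw [Finset.mem_inter] at hj
        have h1 : (G.neighborFinset i).sup' (hniso i) w' ≤ t :=
          Finset.sup'_le _ _ (fun j _ => hw'le j)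
        have h2 : M ≤ (G.neighborFinset i).sup' (hniso i) w := by
          have hjM : w j = M := (Finset.mem_filter.mp hj.2).2
          calc M = w j := hjM.symm
            _ ≤ _ := Finset.le_sup' w hj.1
        rw [if_pos ⟨j, Finset.mem_inter.mpr hj⟩]
        linarith
      · rw [if_neg h, add_zero]
        refine Finset.sup'_le _ _ (fun j hj => ?_)
        have hjne : w j ≠ M := fun he =>
          h ⟨j, Finset.mem_inter.mpr ⟨hj, Finset.mem_filter.mpr ⟨mem_univ j, he⟩⟩⟩
        calc w' j = w j := by simp only [hw', if_neg hjne]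
          _ ≤ _ := Finset.le_sup' w hj
    have hfs : fS G D S = ∑ i ∈ univ.filter (fun i => ((G.neighborFinset i) ∩ S).Nonempty), D i := by
      rw [fS, nbrs_eq_filter]
    calc ∑ j, w j * r j
        = (∑ j, w' j * r j) + ∑ j ∈ S, (M - t) * r j := hLHS
      _ ≤ (∑ i, D i * (G.neighborFinset i).sup' (hniso i) w') + (M - t) * fS G D S := by
          refine add_le_add hIH ?_
          rw [← Finset.mul_sum]
          exact mul_le_mul_of_nonneg_left (hrS S) (by linarith)
      _ = ∑ i, (D i * (G.neighborFinset i).sup' (hniso i) w' +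
            (if ((G.neighborFinset i) ∩ S).Nonempty then D i * (M - t) else 0)) := by
          rw [Finset.sum_add_distrib]
          congr 1
          rw [hfs, Finset.mul_sum, Finset.sum_filter]
          exact Finset.sum_congr rfl fun i _ => by split <;> ring
      _ ≤ ∑ i, D i * (G.neighborFinset i).sup' (hniso i) w := by
          refine Finset.sum_le_sum fun i _ => ?_
          have hb := hRHS i
          by_cases h : ((G.neighborFinset i) ∩ S).Nonempty
          · rw [if_pos h]
            rw [if_pos h] at hb
            rw [← mul_add]
            exact mul_le_mul_of_nonneg_left hb (hD i)
          · rw [if_neg h, add_zero]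
            rw [if_neg h, add_zero] at hb
            exact mul_le_mul_of_nonneg_left hb (hD i)


/-- every vector in the base `A₀` is generated by a feasible allocation
on the edges of the graph. -/
theorem base_generated_by_allocation {V : Type*} [Fintype V] [DecidableEq V]
    (G : SimpleGraph V) [DecidableRel G.Adj]
    (hconn : G.Connected) (hniso : ∀ i, (G.neighborFinset i).Nonempty)
    (D : V → ℝ) (hD : ∀ i, 0 < D i)
    (r : V → ℝ) (hr : r ∈ polyBase (fS G D)) :
    ∃ d : V → V → ℝ,
      (∀ i j, 0 ≤ d i j) ∧
      (∀ i j, ¬ G.Adj i j → d i j = 0) ∧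
      (∀ i, ∑ j ∈ G.neighborFinset i, d i j = D i) ∧
      (∀ i, ∑ j ∈ G.neighborFinset i, d j i = r i) := by
  classical
  have hD' : ∀ i, 0 ≤ D i := fun i => (hD i).le
  set K : Set (V → V → ℝ) :=
    {d | (∀ i j, 0 ≤ d i j) ∧ (∀ i j, ¬ G.Adj i j → d i j = 0) ∧
      ∀ i, ∑ j ∈ G.neighborFinset i, d i j = D i} with hK
  set col : (V → V → ℝ) → (V → ℝ) := fun d j => ∑ i, d i j with hcol
  set C : Set (V → ℝ) := col '' K with hC
  suffices hrC : r ∈ C by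
    obtain ⟨d, ⟨h0, hsupp, hrow⟩, hcoleq⟩ := hrC
    refine ⟨d, h0, hsupp, hrow, fun i => ?_⟩
    have hsub : ∑ j ∈ G.neighborFinset i, d j i = ∑ j, d j i := by
      refine Finset.sum_subset (Finset.subset_univ _) (fun j _ hj => ?_)
      refine hsupp j i (fun h => hj ?_)
      exact (SimpleGraph.mem_neighborFinset _ _ _).mpr h.symm
    rw [hsub]
    exact congrFun hcoleq i
  by_contra hrC
  have e1 : ∀ i j : V, Continuous (fun d : V → V → ℝ => d i j) :=
    fun i j => (continuous_apply j).comp (continuous_apply i)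
  have hKclosed : IsClosed K := by
    have hKeq : K = (⋂ (i : V) (j : V), {d : V → V → ℝ | 0 ≤ d i j}) ∩
        ((⋂ (i : V) (j : V) (_ : ¬ G.Adj i j), {d : V → V → ℝ | d i j = 0}) ∩
         (⋂ i : V, {d : V → V → ℝ | ∑ j ∈ G.neighborFinset i, d i j = D i})) := by
      ext d
      simp only [hK, Set.mem_setOf_eq, Set.mem_inter_iff, Set.mem_iInter]
    rw [hKeq]
    refine IsClosed.inter (isClosed_iInter fun i => isClosed_iInter fun j =>
        isClosed_le continuous_const (e1 i j)) (IsClosed.inter ?_ ?_)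
    · exact isClosed_iInter fun i => isClosed_iInter fun j => isClosed_iInter fun _ =>
        isClosed_eq (e1 i j) continuous_const
    · exact isClosed_iInter fun i =>
        isClosed_eq (continuous_finset_sum _ fun j _ => e1 i j) continuous_const
  have hKcompact : IsCompact K := by
    have hbig : IsCompact (Set.pi (Set.univ : Set V)
        (fun i => Set.pi (Set.univ : Set V) (fun _ => Set.Icc (0:ℝ) (D i)))) :=
      isCompact_univ_pi fun i => isCompact_univ_pi fun _ => isCompact_Icc
    refine IsCompact.of_isClosed_subset hbig hKclosed ?_
    rintro d ⟨h0, hsupp, hrow⟩ i _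
    intro j _
    refine ⟨h0 i j, ?_⟩
    by_cases h : G.Adj i j
    · rw [← hrow i]
      exact Finset.single_le_sum (fun k _ => h0 i k)
        ((SimpleGraph.mem_neighborFinset _ _ _).mpr h)
    · rw [hsupp i j h]; exact hD' i
  have hcolcont : Continuous col :=
    continuous_pi fun j => continuous_finset_sum _ fun i _ => e1 i j
  have hCclosed : IsClosed C := (hKcompact.image hcolcont).isClosed
  have hCconv : Convex ℝ C := by
    rintro x ⟨dx, ⟨hx0, hxs, hxr⟩, rfl⟩ y ⟨dy, ⟨hy0, hys, hyr⟩, rfl⟩ a b ha hb hab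
    refine ⟨a • dx + b • dy, ⟨fun i j => ?_, fun i j h => ?_, fun i => ?_⟩, ?_⟩
    · simp only [Pi.add_apply, Pi.smul_apply, smul_eq_mul]
      exact add_nonneg (mul_nonneg ha (hx0 i j)) (mul_nonneg hb (hy0 i j))
    · simp only [Pi.add_apply, Pi.smul_apply, smul_eq_mul, hxs i j h, hys i j h,
        mul_zero, add_zero]
    · simp only [Pi.add_apply, Pi.smul_apply, smul_eq_mul]
      rw [Finset.sum_add_distrib, ← Finset.mul_sum, ← Finset.mul_sum, hxr i, hyr i,
        ← add_mul, hab, one_mul]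
    · funext j
      simp only [hcol, Pi.add_apply, Pi.smul_apply, smul_eq_mul]
      rw [Finset.sum_add_distrib, ← Finset.mul_sum, ← Finset.mul_sum]
  obtain ⟨φ, u, hu1, hu2⟩ := geometric_hahn_banach_closed_point hCconv hCclosed hrC
  set w : V → ℝ := fun j => φ (fun k => if j = k then 1 else 0) with hw
  have hφ : ∀ x : V → ℝ, φ x = ∑ j, x j * w j := by
    intro x
    conv_lhs => rw [pi_eq_sum_univ x]
    rw [map_sum]
    exact Finset.sum_congr rfl fun j _ => by rw [map_smul, smul_eq_mul]
  choose g hg1 hg2 using fun i => Finset.exists_mem_eq_sup' (hniso i) w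
  set dmax : V → V → ℝ := fun i j => if j = g i then D i else 0 with hdmax
  have hdmaxK : dmax ∈ K := by
    refine ⟨fun i j => ?_, fun i j h => ?_, fun i => ?_⟩
    · simp only [hdmax]; split
      · exact hD' i
      · exact le_refl 0
    · simp only [hdmax]
      rw [if_neg]
      intro he
      subst he
      exact h ((SimpleGraph.mem_neighborFinset _ _ _).mp (hg1 i))
    · simp only [hdmax]
      rw [Finset.sum_ite_eq' (G.neighborFinset i) (g i) (fun _ => D i), if_pos (hg1 i)]
  have hval : φ (col dmax) = ∑ i, D i * (G.neighborFinset i).sup' (hniso i) w := by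
    rw [hφ]
    calc ∑ j, col dmax j * w j = ∑ j, ∑ i, dmax i j * w j := by
          refine Finset.sum_congr rfl fun j _ => ?_
          rw [hcol]; dsimp only; rw [Finset.sum_mul]
      _ = ∑ i, ∑ j, dmax i j * w j := Finset.sum_comm
      _ = ∑ i, D i * w (g i) := by
          refine Finset.sum_congr rfl fun i _ => ?_
          simp only [hdmax, ite_mul, zero_mul]
          simp
      _ = ∑ i, D i * (G.neighborFinset i).sup' (hniso i) w := by
          refine Finset.sum_congr rfl fun i _ => ?_
          rw [hg2 i]
  have h1 : φ (col dmax) < u := hu1 _ ⟨dmax, hdmaxK, rfl⟩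
  have h3 : φ r ≤ φ (col dmax) := by
    rw [hφ, hval]
    have := key_ineq G hniso D hD' hr w
    calc ∑ j, r j * w j = ∑ j, w j * r j :=
          Finset.sum_congr rfl fun j _ => mul_comm _ _
      _ ≤ _ := this
  linarith


end SharingEcon
end
end

section
/- First Lyapunov inequality: let r* ∈ A be lex-optimal and let r ∈ ℝ^N with r ≥ 0 and r_i/D_i having level sets L_k(r), k = 1,…,K(r). Suppose J ∈ ℝ^N satisfies Σ_{i ∈ ∪_{k=1}^{n} L_k(r)} J_i = f(∪_{k=1}^{n} L_k(r)) for every n = 1,…,K(r). Then Σ_{i∈N} (1/D_i) r_i (J_i − r*_i) ≤ 0. -/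
open Finset
open scoped Classical

noncomputable section

namespace SharingEcon
set_option linter.unusedSectionVars false

section Aux
variable {V : Type*} [Fintype V] [DecidableEq V]


lemma getD_le_of_count (l : List ℝ) (hl : l.Pairwise (· ≤ ·)) (a : ℝ) (k : ℕ)
    (hk : k < l.length) (hc : k < l.countP (fun b => decide (b ≤ a))) :
    l.getD k 0 ≤ a := by
  by_contra h
  push_neg at h
  rw [List.getD_eq_getElem l 0 hk] at h
  have hsplit : l.countP (fun b => decide (b ≤ a)) =
      (l.take k).countP (fun b => decide (b ≤ a)) + (l.drop k).countP (fun b => decide (b ≤ a)) := by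
    rw [← List.countP_append, List.take_append_drop]
  have hdrop : (l.drop k).countP (fun b => decide (b ≤ a)) = 0 := by
    rw [List.countP_eq_zero]
    intro b hb
    obtain ⟨j, hj, rfl⟩ := List.mem_iff_getElem.1 hb
    rw [List.getElem_drop]
    simp only [decide_eq_true_eq, not_le]
    refine lt_of_lt_of_le h ?_
    rcases Nat.eq_zero_or_pos j with rfl | hjp
    · simp
    · have := hl.rel_get_of_lt (a := ⟨k, hk⟩) (b := ⟨k + j, by
        have := hj; rw [List.length_drop] at this; omega⟩) (Fin.mk_lt_mk.2 (by omega))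
      simp only [List.get_eq_getElem] at this
      exact this
  have htake : (l.take k).countP (fun b => decide (b ≤ a)) ≤ k := by
    calc (l.take k).countP _ ≤ (l.take k).length := List.countP_le_length
    _ ≤ k := by simp
  omega

lemma count_ge_of_sorted (l : List ℝ) (hl : l.Pairwise (· ≤ ·)) (k : ℕ) (hk : k < l.length) :
    k < l.countP (fun b => decide (b ≤ l.getD k 0)) := by
  set a := l.getD k 0 with ha
  have hall : ∀ b ∈ l.take (k+1), (fun b => decide (b ≤ a)) b = true := by
    intro b hb
    obtain ⟨j, hj, rfl⟩ := List.mem_iff_getElem.1 hb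
    rw [List.getElem_take]
    simp only [decide_eq_true_eq]
    rw [ha, List.getD_eq_getElem l 0 hk]
    have hjk : j ≤ k := by
      rw [List.length_take] at hj; omega
    rcases eq_or_lt_of_le hjk with rfl | hlt
    · exact le_refl _
    · have := hl.rel_get_of_lt (a := ⟨j, by omega⟩) (b := ⟨k, hk⟩) (Fin.mk_lt_mk.2 hlt)
      simp only [List.get_eq_getElem] at this
      exact this
  have htake : (l.take (k+1)).countP (fun b => decide (b ≤ a)) = k + 1 := by
    rw [List.countP_eq_length.2 hall, List.length_take]
    omega
  have hsplit : l.countP (fun b => decide (b ≤ a)) =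
      (l.take (k+1)).countP (fun b => decide (b ≤ a)) + (l.drop (k+1)).countP (fun b => decide (b ≤ a)) := by
    rw [← List.countP_append, List.take_append_drop]
  omega


lemma sortedVec_length (x : V → ℝ) : (sortedVec x).length = Fintype.card V := by
  simp [sortedVec]

lemma sortedVec_sorted (x : V → ℝ) : (sortedVec x).Pairwise (· ≤ ·) :=
  Multiset.pairwise_sort _ _

lemma sortedVec_coe (x : V → ℝ) : ((sortedVec x : List ℝ) : Multiset ℝ) = Finset.univ.val.map x :=
  Multiset.sort_eq _ _

lemma sortedVec_countP (x : V → ℝ) (a : ℝ) :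
    (sortedVec x).countP (fun b => decide (b ≤ a)) = (Finset.univ.filter fun i => x i ≤ a).card := by
  have h1 : (sortedVec x).countP (fun b => decide (b ≤ a)) =
      Multiset.countP (fun b => b ≤ a) ((sortedVec x : List ℝ) : Multiset ℝ) := rfl
  rw [h1, sortedVec_coe, Multiset.countP_map]
  rw [Finset.card_filter]
  simp [Finset.sum_boole]
  rfl

lemma sorted_getD_mono {x y : V → ℝ} (hxy : ∀ i, x i ≤ y i) (k : ℕ) :
    (sortedVec x).getD k 0 ≤ (sortedVec y).getD k 0 := by
  rcases lt_or_ge k (sortedVec x).length with hk | hk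
  · have hky : k < (sortedVec y).length := by
      rw [sortedVec_length] at hk ⊢; exact hk
    set a := (sortedVec y).getD k 0 with ha
    have h1 : k < (sortedVec y).countP (fun b => decide (b ≤ a)) :=
      count_ge_of_sorted _ (sortedVec_sorted y) k hky
    have h2 : (Finset.univ.filter fun i => y i ≤ a).card ≤ (Finset.univ.filter fun i => x i ≤ a).card := by
      apply Finset.card_le_card
      intro i hi
      simp only [Finset.mem_filter] at hi ⊢
      exact ⟨hi.1, le_trans (hxy i) hi.2⟩
    have h3 : k < (sortedVec x).countP (fun b => decide (b ≤ a)) := by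
      rw [sortedVec_countP]
      rw [sortedVec_countP] at h1
      omega
    exact getD_le_of_count _ (sortedVec_sorted x) a k hk h3
  · rw [List.getD_eq_default _ _ hk, List.getD_eq_default]
    rw [sortedVec_length] at hk ⊢; exact hk

lemma sortedVec_sum (x : V → ℝ) : (sortedVec x).sum = ∑ i, x i := by
  have : (sortedVec x).sum = ((sortedVec x : List ℝ) : Multiset ℝ).sum := rfl
  rw [this, sortedVec_coe]
  rfl

lemma not_lexGE {x y : V → ℝ} (hxy : ∀ i, x i ≤ y i) (hsum : ∑ i, x i < ∑ i, y i) :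
    ¬ lexGE x y := by
  rintro (h | ⟨k, _, hlt⟩)
  · have := congrArg List.sum h
    rw [sortedVec_sum, sortedVec_sum] at this
    linarith
  · exact absurd (sorted_getD_mono hxy k) (not_le.2 hlt)

lemma abel_identity (v g : ℕ → ℝ) (K : ℕ) :
    ∑ j ∈ Finset.range K, v (j+1) * (g (j+1) - g j)
      + ∑ j ∈ Finset.range K, (v (j+2) - v (j+1)) * g (j+1)
    = v (K+1) * g K - v 1 * g 0 := by
  induction K with
  | zero => simp
  | succ n ih =>
    rw [Finset.sum_range_succ, Finset.sum_range_succ]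
    linear_combination ih

lemma abel_le (v g : ℕ → ℝ) (K : ℕ) (hg0 : g 0 = 0) (hgK : g K = 0)
    (h : ∀ j < K, 0 ≤ (v (j+2) - v (j+1)) * g (j+1)) :
    ∑ j ∈ Finset.range K, v (j+1) * (g (j+1) - g j) ≤ 0 := by
  have hid := abel_identity v g K
  have hs : 0 ≤ ∑ j ∈ Finset.range K, (v (j+2) - v (j+1)) * g (j+1) :=
    Finset.sum_nonneg fun j hj => h j (Finset.mem_range.1 hj)
  rw [hg0, hgK] at hid
  linarith

lemma fS_submodular (G : SimpleGraph V) [DecidableRel G.Adj] (D : V → ℝ) (hD : ∀ i, 0 ≤ D i)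
    (S T : Finset V) : fS G D (S ∪ T) + fS G D (S ∩ T) ≤ fS G D S + fS G D T := by
  have h1 : nbrs G (S ∪ T) = nbrs G S ∪ nbrs G T := by
    ext j
    simp only [nbrs, Finset.mem_biUnion, Finset.mem_union]
    constructor
    · rintro ⟨i, hi | hi, hij⟩
      exacts [Or.inl ⟨i, hi, hij⟩, Or.inr ⟨i, hi, hij⟩]
    · rintro (⟨i, hi, hij⟩ | ⟨i, hi, hij⟩)
      exacts [⟨i, Or.inl hi, hij⟩, ⟨i, Or.inr hi, hij⟩]
  have h2 : nbrs G (S ∩ T) ⊆ nbrs G S ∩ nbrs G T := by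
    intro j hj
    simp only [nbrs, Finset.mem_biUnion, Finset.mem_inter] at hj ⊢
    obtain ⟨i, hi, hij⟩ := hj
    exact ⟨⟨i, hi.1, hij⟩, ⟨i, hi.2, hij⟩⟩
  have h3 : fS G D (S ∩ T) ≤ ∑ j ∈ nbrs G S ∩ nbrs G T, D j :=
    Finset.sum_le_sum_of_subset_of_nonneg h2 (fun j _ _ => hD j)
  have h4 : fS G D (S ∪ T) = ∑ j ∈ nbrs G S ∪ nbrs G T, D j := by rw [fS, h1]
  have h5 : ∑ j ∈ nbrs G S ∪ nbrs G T, D j + ∑ j ∈ nbrs G S ∩ nbrs G T, D j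
      = ∑ j ∈ nbrs G S, D j + ∑ j ∈ nbrs G T, D j := Finset.sum_union_inter
  have h6 : fS G D S = ∑ j ∈ nbrs G S, D j := rfl
  have h7 : fS G D T = ∑ j ∈ nbrs G T, D j := rfl
  linarith

lemma fS_empty (G : SimpleGraph V) [DecidableRel G.Adj] (D : V → ℝ) : fS G D ∅ = 0 := by
  simp [fS, nbrs]

lemma lexOptimal_sum_eq (G : SimpleGraph V) [DecidableRel G.Adj] (D : V → ℝ) (hD : ∀ i, 0 < D i)
    {rstar : V → ℝ} (hlex : LexOptimal (polyA (fS G D)) D rstar) :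
    ∑ i, rstar i = fS G D Finset.univ := by
  obtain ⟨⟨hpos, hle⟩, hopt⟩ := hlex
  by_contra hne
  have hlt : ∑ i, rstar i < fS G D Finset.univ := lt_of_le_of_ne (hle Finset.univ) hne
  set Tight : Finset V → Prop := fun S => ∑ i ∈ S, rstar i = fS G D S with hTight
  have hunion : ∀ S, Tight S → ∀ T, Tight T → Tight (S ∪ T) := by
    intro S hS T hT
    have hsub := fS_submodular G D (fun i => (hD i).le) S T
    have h1 : ∑ i ∈ S ∪ T, rstar i + ∑ i ∈ S ∩ T, rstar i = ∑ i ∈ S, rstar i + ∑ i ∈ T, rstar i :=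
      Finset.sum_union_inter
    have h2 : ∑ i ∈ S ∪ T, rstar i ≤ fS G D (S ∪ T) := hle _
    have h3 : ∑ i ∈ S ∩ T, rstar i ≤ fS G D (S ∩ T) := hle _
    simp only [hTight] at hS hT ⊢
    linarith
  have hempty : Tight ∅ := by simp [hTight, fS_empty]
  set U : Finset V := (Finset.univ.powerset.filter Tight).sup id with hU
  have hUt : Tight U := by
    apply Finset.sup_induction hempty (fun a ha b hb => hunion a ha b hb)
    intro S hS
    exact (Finset.mem_filter.1 hS).2
  have hUsub : ∀ S : Finset V, Tight S → S ⊆ U := by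
    intro S hS
    exact Finset.le_sup (f := id) (Finset.mem_filter.2 ⟨Finset.mem_powerset.2 (Finset.subset_univ S), hS⟩)
  have hUne : ¬ Finset.univ ⊆ U := by
    intro h
    have : U = Finset.univ := le_antisymm (Finset.subset_univ U) h
    rw [this] at hUt
    exact absurd hUt (ne_of_lt hlt)
  obtain ⟨i, _, hiU⟩ := Finset.not_subset.1 hUne
  -- the finset of sets containing i
  set F : Finset (Finset V) := Finset.univ.powerset.filter (fun S => i ∈ S) with hF
  have hFne : F.Nonempty := ⟨{i}, by simp [hF]⟩
  set ε : ℝ := F.inf' hFne (fun S => fS G D S - ∑ j ∈ S, rstar j) with he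
  have hεpos : 0 < ε := by
    rw [he, Finset.lt_inf'_iff]
    intro S hS
    have hiS : i ∈ S := (Finset.mem_filter.1 hS).2
    have hslack : ∑ j ∈ S, rstar j ≠ fS G D S := by
      intro h
      exact hiU (hUsub S h hiS)
    have := hle S
    cases lt_or_eq_of_le this with
    | inl h => linarith
    | inr h => exact absurd h hslack
  set r' : V → ℝ := fun j => rstar j + (if j = i then ε else 0) with hr'
  have hsum' : ∀ S : Finset V, ∑ j ∈ S, r' j = ∑ j ∈ S, rstar j + (if i ∈ S then ε else 0) := by
    intro S
    rw [hr', Finset.sum_add_distrib, Finset.sum_ite_eq' S i (fun _ => ε)]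
  have hr'A : r' ∈ polyA (fS G D) := by
    constructor
    · intro j
      rw [hr']
      have : (0:ℝ) ≤ (if j = i then ε else 0) := by positivity
      have := hpos j
      dsimp only
      linarith
    · intro S
      rw [hsum' S]
      by_cases hiS : i ∈ S
      · rw [if_pos hiS]
        have hεle : ε ≤ fS G D S - ∑ j ∈ S, rstar j :=
          Finset.inf'_le _ (Finset.mem_filter.2 ⟨Finset.mem_powerset.2 (Finset.subset_univ S), hiS⟩)
        linarith
      · rw [if_neg hiS]
        simpa using hle S
  have hgel := hopt r' hr'A
  refine not_lexGE (x := fun j => rstar j / D j) (y := fun j => r' j / D j) ?_ ?_ hgel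
  · intro j
    have h1 : rstar j ≤ r' j := by
      rw [hr']
      dsimp only
      have : (0:ℝ) ≤ (if j = i then ε else 0) := by
        by_cases h : j = i <;> simp [h, hεpos.le]
      linarith
    exact (div_le_div_iff_of_pos_right (hD j)).2 h1
  · have hsplit : ∑ j, r' j / D j = ∑ j, rstar j / D j + ∑ j, (if j = i then ε else 0) / D j := by
      rw [← Finset.sum_add_distrib]
      apply Finset.sum_congr rfl
      intro j _
      rw [hr']
      dsimp only
      rw [add_div]
    have hone : ∑ j, (if j = i then ε else 0) / D j = ε / D i := by
      rw [Finset.sum_eq_single i]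
      · rw [if_pos rfl]
      · intro b _ hb
        rw [if_neg hb, zero_div]
      · intro h
        exact absurd (Finset.mem_univ i) h
    have hp : 0 < ε / D i := div_pos hεpos (hD i)
    rw [hsplit, hone]
    linarith


lemma numLevels_eq_length (D r : V → ℝ) : numLevels D r = (vals D r).length := rfl

lemma exists_level_index (D r : V → ℝ) (i : V) :
    ∃ k, 1 ≤ k ∧ k ≤ numLevels D r ∧ ratio D r i = v D r k := by
  have hmem : ratio D r i ∈ vals D r := by
    rw [vals, Finset.mem_sort]
    exact Finset.mem_image_of_mem _ (Finset.mem_univ i)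
  obtain ⟨n, hn, he⟩ := List.mem_iff_getElem.1 hmem
  refine ⟨n + 1, by omega, by rw [numLevels_eq_length]; omega, ?_⟩
  rw [v]
  simp only [Nat.add_sub_cancel]
  rw [List.getD_eq_getElem _ _ hn, he]

lemma v_strict (D r : V → ℝ) {k k' : ℕ} (h1 : 1 ≤ k) (h2 : k < k') (h3 : k' ≤ numLevels D r) :
    v D r k < v D r k' := by
  have hs : (vals D r).Pairwise (· < ·) := (Finset.sortedLT_sort _).pairwise
  have hlen : (vals D r).length = numLevels D r := rfl
  have hk : k - 1 < (vals D r).length := by omega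
  have hk' : k' - 1 < (vals D r).length := by omega
  have := hs.rel_get_of_lt (a := ⟨k - 1, hk⟩) (b := ⟨k' - 1, hk'⟩) (Fin.mk_lt_mk.2 (by omega))
  simp only [List.get_eq_getElem] at this
  rw [v, v, List.getD_eq_getElem _ _ hk, List.getD_eq_getElem _ _ hk']
  exact this

lemma level_disjoint (D r : V → ℝ) {k k' : ℕ} (h1 : 1 ≤ k) (h1' : 1 ≤ k')
    (hk : k ≤ numLevels D r) (hk' : k' ≤ numLevels D r) (hne : k ≠ k') :
    Disjoint (level D r k) (level D r k') := by
  rw [Finset.disjoint_left]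
  intro i hi hi'
  have e1 : ratio D r i = v D r k := (Finset.mem_filter.1 hi).2
  have e2 : ratio D r i = v D r k' := (Finset.mem_filter.1 hi').2
  rcases lt_or_gt_of_ne hne with h | h
  · have := v_strict D r h1 h hk'
    rw [← e1, ← e2] at this
    exact lt_irrefl _ this
  · have := v_strict D r h1' h hk
    rw [← e1, ← e2] at this
    exact lt_irrefl _ this

end Aux
end SharingEcon

namespace SharingEcon

/-- first Lyapunov inequality: if `r*` is lex-optimal, `r ≥ 0`, and `J`
satisfies `Σ_{i ∈ ∪_{k=1}^{n} L_k(r)} J_i = f(∪_{k=1}^{n} L_k(r))` for every `n = 1,…,K(r)`,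
then `Σ_i (1/D_i) r_i (J_i − r*_i) ≤ 0`. -/
theorem lyapunov_first_inequality {V : Type*} [Fintype V] [DecidableEq V]
    (G : SimpleGraph V) [DecidableRel G.Adj]
    (hconn : G.Connected) (hniso : ∀ i, (G.neighborFinset i).Nonempty)
    (D : V → ℝ) (hD : ∀ i, 0 < D i)
    (rstar : V → ℝ) (hlex : LexOptimal (polyA (fS G D)) D rstar)
    (r : V → ℝ) (hrpos : ∀ i, 0 ≤ r i)
    (J : V → ℝ)
    (hJ : ∀ n : ℕ, 1 ≤ n → n ≤ numLevels D r →
      ∑ i ∈ (Finset.Icc 1 n).biUnion (level D r), J i =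
        fS G D ((Finset.Icc 1 n).biUnion (level D r))) :
    ∑ i, (1 / D i) * r i * (J i - rstar i) ≤ 0 := by
  classical
  set K := numLevels D r with hK
  set L := level D r with hL
  set S : ℕ → Finset V := fun n => (Finset.Icc 1 n).biUnion L with hS
  set g : ℕ → ℝ := fun n => ∑ i ∈ S n, (J i - rstar i) with hg
  have hdisj : ∀ n, n ≤ K → (↑(Finset.Icc 1 n) : Set ℕ).PairwiseDisjoint L := by
    intro n hn k hk k' hk' hne
    simp only [Finset.coe_Icc, Set.mem_Icc] at hk hk'
    exact level_disjoint D r hk.1 hk'.1 (le_trans hk.2 hn) (le_trans hk'.2 hn) hne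
  have hSuniv : S K = Finset.univ := by
    apply Finset.eq_univ_of_forall
    intro i
    obtain ⟨k, h1, h2, h3⟩ := exists_level_index D r i
    refine Finset.mem_biUnion.2 ⟨k, Finset.mem_Icc.2 ⟨h1, h2⟩, ?_⟩
    rw [hL, level, Finset.mem_filter]
    exact ⟨Finset.mem_univ i, h3⟩
  have hbase : ∑ i, rstar i = fS G D Finset.univ := lexOptimal_sum_eq G D hD hlex
  have hg0 : g 0 = 0 := by simp [hg, hS]
  have hgn : ∀ n, 1 ≤ n → n ≤ K → g n = fS G D (S n) - ∑ i ∈ S n, rstar i := by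
    intro n h1 h2
    have hJn := hJ n h1 h2
    rw [hg]
    dsimp only
    rw [Finset.sum_sub_distrib, hJn]
  have hgK : g K = 0 := by
    by_cases hK0 : K = 0
    · rw [hK0]; exact hg0
    · rw [hgn K (by omega) le_rfl, hSuniv, ← hbase]
      ring
  have hgnn : ∀ n, 1 ≤ n → n ≤ K → 0 ≤ g n := by
    intro n h1 h2
    rw [hgn n h1 h2]
    have := hlex.1.2 (S n)
    linarith
  have hstep : ∀ j, j < K → g (j + 1) - g j = ∑ i ∈ L (j + 1), (J i - rstar i) := by
    intro j hj
    have hins : Finset.Icc 1 (j + 1) = insert (j + 1) (Finset.Icc 1 j) := by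
      ext m
      simp only [Finset.mem_Icc, Finset.mem_insert]
      omega
    have hdis : Disjoint (L (j + 1)) (S j) := by
      rw [hS]
      dsimp only
      rw [Finset.disjoint_biUnion_right]
      intro k hk
      have hk' := Finset.mem_Icc.1 hk
      exact level_disjoint D r (by omega) hk'.1 (by omega) (by omega) (by omega)
    have : S (j + 1) = L (j + 1) ∪ S j := by
      rw [hS]
      dsimp only
      rw [hins, Finset.biUnion_insert]
    rw [hg]
    dsimp only
    rw [this, Finset.sum_union hdis]
    ring
  have hLHS : ∑ i, (1 / D i) * r i * (J i - rstar i)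
      = ∑ k ∈ Finset.Icc 1 K, v D r k * ∑ i ∈ L k, (J i - rstar i) := by
    rw [← hSuniv, hS]
    dsimp only
    rw [Finset.sum_biUnion (hdisj K le_rfl)]
    apply Finset.sum_congr rfl
    intro k _
    rw [Finset.mul_sum]
    apply Finset.sum_congr rfl
    intro i hi
    have hrk : ratio D r i = v D r k := by
      have := (Finset.mem_filter.1 hi).2
      exact this
    rw [← hrk, ratio]
    ring
  have hreindex : ∑ k ∈ Finset.Icc 1 K, v D r k * ∑ i ∈ L k, (J i - rstar i)
      = ∑ j ∈ Finset.range K, v D r (j + 1) * (g (j + 1) - g j) := by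
    rw [← Finset.Ico_add_one_right_eq_Icc, Finset.sum_Ico_eq_sum_range]
    apply Finset.sum_congr rfl
    intro j hj
    rw [hstep j (Finset.mem_range.1 hj), Nat.add_comm 1 j]
  rw [hLHS, hreindex]
  apply abel_le (v D r) g K hg0 hgK
  intro j hj
  by_cases hjK : j + 1 = K
  · rw [hjK, hgK, mul_zero]
  · have h2 : j + 2 ≤ K := by omega
    have hv : v D r (j + 1) ≤ v D r (j + 2) :=
      (v_strict D r (by omega) (by omega) h2).le
    exact mul_nonneg (by linarith) (hgnn (j + 1) (by omega) (by omega))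


end SharingEcon
end
end
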